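/- arXiv:1103.4372 — 3 statements merged into one kernel-verified Lean document; each statement's English description precedes it below -/
import Mathlib

section
/- Let a_1, ..., a_n be distinct real numbers with a_i > 1 for each i, and let U > 0. If a linear combination Σ_{i=1}^n c_i (sqrt(1 + a_i u) - 1) vanishes identically for all u in the open interval (0, U), then all c_i = 0. -/
/-!
On `(0, U)` the function `F u = ∑ cᵢ (1 + aᵢ u) ^ (1/2)` is constant, so at the interior point
`u₀ = U / 2` all its derivatives of positive order vanish. The `(j+1)`-st derivative equals
`(1/2)(1/2 - 1)⋯(1/2 - j) · ∑ cᵢ aᵢ (1 + aᵢ u₀) ^ (-1/2) · xᵢ ^ j` with `xᵢ = aᵢ / (1 + aᵢ u₀)`.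
The Pochhammer factor is nonzero since `1/2` is not a natural number, and the `xᵢ` are distinct,
so the Vandermonde system forces `cᵢ aᵢ (1 + aᵢ u₀) ^ (-1/2) = 0`, i.e. `cᵢ = 0`.
-/

open Filter Topology Polynomial

theorem descPochhammer_eval_ne_zero {R : Type*} [CommRing R] [IsDomain R] {r : R}
    (hr : ∀ m : ℕ, r ≠ m) (k : ℕ) : (descPochhammer R k).eval r ≠ 0 := by
  rw [descPochhammer_eval_eq_prod_range]
  exact Finset.prod_ne_zero_iff.2 fun j _ => sub_ne_zero.2 (hr j)

theorem iter_deriv_comp_const_add_mul {𝕜 : Type*} [NontriviallyNormedField 𝕜] (f : 𝕜 → 𝕜)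
    (b a : 𝕜) (k : ℕ) :
    deriv^[k] (fun u => f (b + a * u)) = fun u => a ^ k * deriv^[k] f (b + a * u) := by
  induction k with
  | zero => simp
  | succ k ih =>
    ext u
    rw [Function.iterate_succ_apply', ih, deriv_const_mul_field,
      deriv_comp_mul_left (f := fun v => deriv^[k] f (b + v)), deriv_comp_const_add,
      Function.iterate_succ_apply', smul_eq_mul, pow_succ, mul_assoc]

theorem iteratedDeriv_one_add_mul_rpow (a r u : ℝ) (k : ℕ) :
    iteratedDeriv k (fun u => (1 + a * u) ^ r) u
      = a ^ k * (descPochhammer ℝ k).eval r * (1 + a * u) ^ (r - k) := by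
  rw [iteratedDeriv_eq_iterate, iter_deriv_comp_const_add_mul (· ^ r)]
  beta_reduce
  rw [Real.iter_deriv_rpow_const, mul_assoc]

theorem contDiffAt_one_add_mul_rpow {a r u : ℝ} (hu : 1 + a * u ≠ 0) (k : ℕ∞) :
    ContDiffAt ℝ k (fun u => (1 + a * u) ^ r) u :=
  (Real.contDiffAt_rpow_const_of_ne hu).comp u
    (contDiffAt_const.add (contDiffAt_const.mul contDiffAt_id))

theorem iteratedDeriv_sum_mul_one_add_mul_rpow {ι : Type*} (s : Finset ι) (a c : ι → ℝ)
    {r u : ℝ} (hu : ∀ i ∈ s, 1 + a i * u ≠ 0) (k : ℕ) :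
    iteratedDeriv k (fun u => ∑ i ∈ s, c i * (1 + a i * u) ^ r) u
      = (descPochhammer ℝ k).eval r * ∑ i ∈ s, c i * a i ^ k * (1 + a i * u) ^ (r - k) := by
  rw [iteratedDeriv_fun_sum fun i hi =>
      contDiffAt_const.mul (contDiffAt_one_add_mul_rpow (hu i hi) k), Finset.mul_sum]
  refine Finset.sum_congr rfl fun i _ => ?_
  rw [iteratedDeriv_const_mul_field, iteratedDeriv_one_add_mul_rpow]
  ring

theorem div_one_add_mul_injective {ι K : Type*} [Field K] {a : ι → K}
    (ha : Function.Injective a) {u : K} (hu : ∀ i, 1 + a i * u ≠ 0) :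
    Function.Injective fun i => a i / (1 + a i * u) := by
  intro i j hij
  apply ha
  linear_combination (div_eq_div_iff (hu i) (hu j)).1 hij

theorem eq_zero_of_sum_mul_one_add_mul_rpow_eventuallyEq_const {n : ℕ} {a c : Fin n → ℝ}
    {r u₀ C : ℝ} (hr : ∀ m : ℕ, r ≠ m) (ha₀ : ∀ i, a i ≠ 0) (ha : Function.Injective a)
    (hu₀ : ∀ i, 0 < 1 + a i * u₀)
    (h : (fun u => ∑ i, c i * (1 + a i * u) ^ r) =ᶠ[𝓝 u₀] fun _ => C) : c = 0 := by
  set v : Fin n → ℝ := fun i => c i * a i * (1 + a i * u₀) ^ (r - 1)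
  have hmoments (j : ℕ) : ∑ i, v i * (a i / (1 + a i * u₀)) ^ j = 0 := by
    have hderiv := h.iteratedDeriv_eq (j + 1)
    rw [iteratedDeriv_sum_mul_one_add_mul_rpow _ _ _ fun i _ => (hu₀ i).ne', iteratedDeriv_const,
      if_neg j.succ_ne_zero] at hderiv
    rw [← (mul_eq_zero.1 hderiv).resolve_left (descPochhammer_eval_ne_zero hr _)]
    refine Finset.sum_congr rfl fun i _ => ?_
    rw [Nat.cast_succ, ← sub_sub, sub_right_comm, Real.rpow_sub_natCast (hu₀ i).ne', div_pow]
    field_simp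
    ring
  have hv : v = 0 := Matrix.eq_zero_of_forall_pow_sum_mul_pow_eq_zero
    (div_one_add_mul_injective ha fun i => (hu₀ i).ne') fun j => hmoments j
  funext i
  have hvi : c i * a i * (1 + a i * u₀) ^ (r - 1) = 0 := congrFun hv i
  simpa [ha₀ i, (Real.rpow_pos_of_pos (hu₀ i) _).ne'] using hvi

/-- Linear independence of `u ↦ √(1 + a u) - 1` for distinct parameters `a > 1` on `(0, U)`. -/
theorem sqrt_one_add_mul_linearIndependent {n : ℕ} (a c : Fin n → ℝ)
    (ha : ∀ i, 1 < a i) (ha_inj : Function.Injective a) (U : ℝ) (hU : 0 < U)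
    (h : ∀ u ∈ Set.Ioo (0 : ℝ) U, ∑ i, c i * (Real.sqrt (1 + a i * u) - 1) = 0) :
    ∀ i, c i = 0 := by
  have ha₀ (i : Fin n) : 0 < a i := zero_lt_one.trans (ha i)
  have hhalf (m : ℕ) : (1 / 2 : ℝ) ≠ m := by
    intro hm
    have h2m : (2 * m : ℝ) = 1 := by rw [← hm]; norm_num
    norm_cast at h2m
    omega
  have hconst : (fun u => ∑ i, c i * (1 + a i * u) ^ (1 / 2 : ℝ)) =ᶠ[𝓝 (U / 2)]
      fun _ => ∑ i, c i := by
    filter_upwards [Ioo_mem_nhds (half_pos hU) (half_lt_self hU)] with u hu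
    rw [← sub_eq_zero, ← Finset.sum_sub_distrib, ← h u hu]
    refine Finset.sum_congr rfl fun i _ => ?_
    rw [Real.sqrt_eq_rpow]
    ring
  exact congrFun (eq_zero_of_sum_mul_one_add_mul_rpow_eventuallyEq_const hhalf
    (fun i => (ha₀ i).ne') ha_inj (fun i => by have := ha₀ i; positivity) hconst)
end

section
/- The functions f_θ(s) = 2π(sqrt(1 + sinh²(s/2)/sin²(θ/2)) − 1), for finitely many distinct angles θ_1, ..., θ_n in (0, π], are linearly independent as functions on any interval (0, S) with S > 0: no nontrivial real linear combination vanishes identically on (0, S). -/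
/-!
Put `u = sinh²(s/2)` and `a = 1 / sin²(θ/2)`; distinct angles give distinct `a > 0`, and the
relation says that `∑ cᵢ √(1 + aᵢ u)` is constant for small `u > 0`. Differentiating `k` times
at a point `u₀` gives `∑ cᵢ √(1 + aᵢ u₀) xᵢᵏ = 0` for all `k ≥ 1`, where `xᵢ = aᵢ / (1 + aᵢ u₀)`
are distinct and nonzero, so the Vandermonde determinant forces every `cᵢ` to vanish.
-/

open Real

theorem eq_zero_of_sum_mul_pow_succ_eq_zero {R : Type*} [CommRing R] [IsDomain R] {n : ℕ}
    {x d : Fin n → R} (hx : Function.Injective x) (hx0 : ∀ i, x i ≠ 0)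
    (h : ∀ k : ℕ, ∑ i, d i * x i ^ (k + 1) = 0) : d = 0 := by
  have hvec : Matrix.vecMul (fun i => d i * x i) (Matrix.vandermonde x) = 0 := by
    ext k
    simpa [Matrix.vecMul, dotProduct, mul_assoc, pow_succ'] using h k
  have hdet := Matrix.det_vandermonde_ne_zero_iff.2 hx
  funext i
  have := congrFun (Matrix.eq_zero_of_vecMul_eq_zero hdet hvec) i
  exact (mul_eq_zero.1 this).resolve_right (hx0 i)

section ShiftedPowers

variable {ι : Type*} [Fintype ι] (a c : ι → ℝ)

theorem hasDerivAt_sum_mul_one_add_mul_rpow (q : ℝ) {u : ℝ} (hu : ∀ i, 0 < 1 + a i * u) :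
    HasDerivAt (fun v => ∑ i, c i * (1 + a i * v) ^ q)
      (q * ∑ i, c i * a i * (1 + a i * u) ^ (q - 1)) u := by
  rw [Finset.mul_sum]
  refine HasDerivAt.fun_sum fun i _ => ?_
  have hlin : HasDerivAt (fun v => 1 + a i * v) (a i) u := by
    simpa using ((hasDerivAt_id u).const_mul (a i)).const_add 1
  exact ((hlin.rpow_const (Or.inl (hu i).ne')).const_mul (c i)).congr_deriv (by ring)

variable {a c} {s : Set ℝ}

theorem sum_mul_one_add_mul_rpow_sub_one_eq_zero (hs : IsOpen s)
    (hpos : ∀ u ∈ s, ∀ i, 0 < 1 + a i * u) {q K : ℝ} (hq : q ≠ 0)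
    (hK : ∀ u ∈ s, ∑ i, c i * (1 + a i * u) ^ q = K) :
    ∀ u ∈ s, ∑ i, c i * a i * (1 + a i * u) ^ (q - 1) = 0 := by
  intro u hu
  have hconst : HasDerivAt (fun v => ∑ i, c i * (1 + a i * v) ^ q) 0 u :=
    (hasDerivAt_const u K).congr_of_eventuallyEq
      (Filter.eventually_of_mem (hs.mem_nhds hu) hK)
  have := (hasDerivAt_sum_mul_one_add_mul_rpow a c q (hpos u hu)).unique hconst
  exact (mul_eq_zero.1 this).resolve_left hq

theorem sum_mul_pow_succ_mul_one_add_mul_rpow_eq_zero (hs : IsOpen s)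
    (hpos : ∀ u ∈ s, ∀ i, 0 < 1 + a i * u) {p K : ℝ} (hp : ∀ k : ℕ, p ≠ k)
    (hK : ∀ u ∈ s, ∑ i, c i * (1 + a i * u) ^ p = K) (k : ℕ) :
    ∀ u ∈ s, ∑ i, c i * a i ^ (k + 1) * (1 + a i * u) ^ (p - (k + 1 : ℕ)) = 0 := by
  induction k with
  | zero =>
    simpa using sum_mul_one_add_mul_rpow_sub_one_eq_zero hs hpos (by exact_mod_cast hp 0) hK
  | succ k ih =>
    have hq : p - (k + 1 : ℕ) ≠ 0 := sub_ne_zero.2 (hp (k + 1))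
    intro u hu
    rw [← sum_mul_one_add_mul_rpow_sub_one_eq_zero hs hpos hq ih u hu]
    refine Finset.sum_congr rfl fun i _ => ?_
    push_cast
    ring_nf

end ShiftedPowers

theorem eq_zero_of_sum_mul_one_add_mul_rpow_eq_const {n : ℕ} {a c : Fin n → ℝ}
    (ha : Function.Injective a) (ha0 : ∀ i, a i ≠ 0) {s : Set ℝ} (hs : IsOpen s) {u₀ : ℝ}
    (hu₀ : u₀ ∈ s) (hpos : ∀ u ∈ s, ∀ i, 0 < 1 + a i * u) {p K : ℝ} (hp : ∀ k : ℕ, p ≠ k)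
    (hK : ∀ u ∈ s, ∑ i, c i * (1 + a i * u) ^ p = K) : c = 0 := by
  have hb : ∀ i, 1 + a i * u₀ ≠ 0 := fun i => (hpos u₀ hu₀ i).ne'
  -- At `u₀`, the `k`-th derivative is the `k`-th moment of the weights `c i * (1 + a i * u₀) ^ p`
  -- at the nodes `a i / (1 + a i * u₀)`.
  have hmoments : ∀ k : ℕ,
      ∑ i, c i * (1 + a i * u₀) ^ p * (a i / (1 + a i * u₀)) ^ (k + 1) = 0 := by
    intro k
    rw [← sum_mul_pow_succ_mul_one_add_mul_rpow_eq_zero hs hpos hp hK k u₀ hu₀]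
    refine Finset.sum_congr rfl fun i _ => ?_
    rw [Real.rpow_sub_natCast (hb i), div_pow]
    ring
  have hnodes : Function.Injective fun i => a i / (1 + a i * u₀) := by
    intro i j hij
    rw [div_eq_div_iff (hb i) (hb j)] at hij
    exact ha (by linarith)
  funext i
  have := congrFun (eq_zero_of_sum_mul_pow_succ_eq_zero hnodes
    (fun i => div_ne_zero (ha0 i) (hb i)) hmoments) i
  exact (mul_eq_zero.1 this).resolve_right (Real.rpow_pos_of_pos (hpos u₀ hu₀ i) p).ne'

theorem strictMonoOn_sin_half_sq : StrictMonoOn (fun θ => sin (θ / 2) ^ 2) (Set.Icc 0 π) := by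
  intro x hx y hy hxy
  have hsin : sin (x / 2) < sin (y / 2) :=
    strictMonoOn_sin ⟨by linarith [hx.1, pi_pos], by linarith [hx.2]⟩
      ⟨by linarith [hy.1, pi_pos], by linarith [hy.2]⟩ (by linarith)
  have : 0 ≤ sin (x / 2) :=
    sin_nonneg_of_nonneg_of_le_pi (by linarith [hx.1]) (by linarith [hx.2, pi_pos])
  dsimp only
  gcongr

theorem exists_sinh_half_sq_eq {S u : ℝ} (hS : 0 ≤ S) (hu : u ∈ Set.Ioo 0 (sinh (S / 2) ^ 2)) :
    ∃ s ∈ Set.Ioo 0 S, sinh (s / 2) ^ 2 = u :=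
  intermediate_value_Ioo hS (by fun_prop) (by simpa using hu)

/-- The rotation-contribution functions
`f_θ(s) = 2π(√(1 + sinh²(s/2)/sin²(θ/2)) − 1)` for finitely many distinct angles
`θ i ∈ (0, π]` are linearly independent on any interval `(0, S)`. -/
theorem rotation_contributions_linearIndependent {n : ℕ} (θ : Fin n → ℝ)
    (hθ : ∀ i, θ i ∈ Set.Ioc (0 : ℝ) π) (hθ_inj : Function.Injective θ)
    (S : ℝ) (hS : 0 < S) (c : Fin n → ℝ)
    (h : ∀ s ∈ Set.Ioo (0 : ℝ) S,
      ∑ i, c i *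
        (2 * π * (Real.sqrt (1 + Real.sinh (s / 2) ^ 2 / Real.sin (θ i / 2) ^ 2) - 1)) = 0) :
    ∀ i, c i = 0 := by
  set a : Fin n → ℝ := fun i => (sin (θ i / 2) ^ 2)⁻¹
  have hsin : ∀ i, 0 < sin (θ i / 2) := fun i =>
    sin_pos_of_pos_of_lt_pi (by linarith [(hθ i).1]) (by linarith [(hθ i).2, pi_pos])
  have ha : Function.Injective a := fun i j hij =>
    hθ_inj (strictMonoOn_sin_half_sq.injOn (Set.Ioc_subset_Icc_self (hθ i))
      (Set.Ioc_subset_Icc_self (hθ j)) (inv_injective hij))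
  have ha0 : ∀ i, 0 < a i := fun i => by have := hsin i; positivity
  have hpos : ∀ u ∈ Set.Ioo 0 (sinh (S / 2) ^ 2), ∀ i, 0 < 1 + a i * u := fun u hu i => by
    nlinarith [hu.1, ha0 i]
  have hhalf : ∀ k : ℕ, (1 / 2 : ℝ) ≠ k := fun k hk => by
    have : 2 * k = 1 := by exact_mod_cast (by linarith : (2 * k : ℝ) = 1)
    omega
  have hU : 0 < sinh (S / 2) ^ 2 := by have := sinh_pos_iff.2 (half_pos hS); positivity
  suffices hK : ∀ u ∈ Set.Ioo 0 (sinh (S / 2) ^ 2),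
      ∑ i, c i * (1 + a i * u) ^ (1 / 2 : ℝ) = ∑ i, c i from
    congrFun (eq_zero_of_sum_mul_one_add_mul_rpow_eq_const ha (fun i => (ha0 i).ne')
      isOpen_Ioo ⟨half_pos hU, half_lt_self hU⟩ hpos hhalf hK)
  intro u hu
  obtain ⟨s, hs, rfl⟩ := exists_sinh_half_sq_eq hS.le hu
  have hterm : ∀ i, c i * (2 * π * (√(1 + sinh (s / 2) ^ 2 / sin (θ i / 2) ^ 2) - 1)) =
      2 * π * (c i * (1 + a i * sinh (s / 2) ^ 2) ^ (1 / 2 : ℝ) - c i) := fun i => by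
    rw [sqrt_eq_rpow, div_eq_inv_mul]
    ring
  have := h s hs
  simp_rw [hterm, ← Finset.mul_sum, Finset.sum_sub_distrib] at this
  exact sub_eq_zero.1 ((mul_eq_zero.1 this).resolve_left (by positivity))
end

section
/- The function s ↦ sinh(s/2) is not in the linear span of the functions f_{θ_1}, ..., f_{θ_n} together with constants on any interval (0, S): if R·sinh(s/2) + Σ c_i f_{θ_i}(s) + c₀ = 0 for all s ∈ (0, S), with distinct θ_i ∈ (0, π], then R = 0, c₀ = 0, and all c_i = 0. -/
/-!
Put `u = sinh²(s/2)`. Near a point `u₀ > 0` the relation becomes a vanishing combination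
`∑ e_j (a_j + b_j u)^(1/2) = 0` of the functions `√u`, `1` and `√(1 + u / sin²(θ_i/2))`, whose
coefficient pairs `(a_j, b_j)` are pairwise non-proportional. Its `k`-th derivative at `u₀` is
`(1/2)(1/2 - 1)⋯(1/2 - k + 1) ∑ e_j w_j^(1/2) ρ_j^k` with `w_j = a_j + b_j u₀` and pairwise
distinct `ρ_j = b_j / w_j`. Since `1/2 ∉ ℕ` the falling factorials never vanish, so all moments
`∑ e_j w_j^(1/2) ρ_j^k` vanish and the Vandermonde determinant forces every `e_j = 0`.
-/

open Real Filter Topology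

theorem Fintype.eq_zero_of_forall_sum_mul_pow_eq_zero {ι R : Type*} [Fintype ι] [CommRing R]
    [IsDomain R] {f v : ι → R} (hf : Function.Injective f) (h : ∀ k : ℕ, ∑ i, v i * f i ^ k = 0) :
    v = 0 := by
  let σ := Fintype.equivFin ι
  have hvσ : v ∘ σ.symm = 0 :=
    Matrix.eq_zero_of_forall_pow_sum_mul_pow_eq_zero (hf.comp σ.symm.injective)
      fun k => (σ.symm.sum_comp fun i => v i * f i ^ (k : ℕ)).trans (h k)
  funext i
  simpa using congrFun hvσ (σ i)

section AffineRpow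

variable {ι : Type*} [Fintype ι] {p : ℝ} {a b e : ι → ℝ} {u₀ : ℝ}

theorem hasDerivAt_sum_mul_pow_mul_rpow_affine {u : ℝ} (hu : ∀ i, 0 < a i + b i * u) (k : ℕ) :
    HasDerivAt (fun u => ∑ i, e i * b i ^ k * (a i + b i * u) ^ (p - k))
      ((p - k) * ∑ i, e i * b i ^ (k + 1) * (a i + b i * u) ^ (p - (k + 1 : ℕ))) u := by
  rw [Finset.mul_sum]
  refine HasDerivAt.fun_sum fun i _ => ?_
  have hlin : HasDerivAt (fun u => a i + b i * u) (b i) u := by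
    simpa using ((hasDerivAt_id u).const_mul (b i)).const_add (a i)
  refine ((hlin.rpow_const (p := p - k) (Or.inl (hu i).ne')).const_mul _).congr_deriv ?_
  rw [show p - ((k + 1 : ℕ) : ℝ) = p - k - 1 by push_cast; ring]
  ring

theorem eventuallyEq_zero_sum_mul_pow_mul_rpow_affine (hp : ∀ k : ℕ, p ≠ k)
    (hpos : ∀ i, 0 < a i + b i * u₀)
    (h : (fun u => ∑ i, e i * (a i + b i * u) ^ p) =ᶠ[𝓝 u₀] 0) (k : ℕ) :
    (fun u => ∑ i, e i * b i ^ k * (a i + b i * u) ^ (p - k)) =ᶠ[𝓝 u₀] 0 := by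
  induction k with
  | zero => simpa using h
  | succ k ih =>
    have hpos_near : ∀ᶠ u in 𝓝 u₀, ∀ i, 0 < a i + b i * u :=
      eventually_all.2 fun i => continuousAt_const.eventually_lt (by fun_prop) (hpos i)
    filter_upwards [ih.deriv, hpos_near] with u hderiv hu
    rw [(hasDerivAt_sum_mul_pow_mul_rpow_affine hu k).deriv, deriv_zero, Pi.zero_apply] at hderiv
    exact (mul_eq_zero.1 hderiv).resolve_left (sub_ne_zero.2 (hp k))

theorem eq_zero_of_sum_mul_rpow_affine_eventuallyEq_zero (hp : ∀ k : ℕ, p ≠ k)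
    (hab : ∀ i j, a i * b j = a j * b i → i = j) (hpos : ∀ i, 0 < a i + b i * u₀)
    (h : (fun u => ∑ i, e i * (a i + b i * u) ^ p) =ᶠ[𝓝 u₀] 0) : e = 0 := by
  have hρ : Function.Injective fun i => b i / (a i + b i * u₀) := by
    intro i j hij
    rw [div_eq_div_iff (hpos i).ne' (hpos j).ne'] at hij
    exact hab i j (by linear_combination -hij)
  have hmoments : ∀ k : ℕ, ∑ i, e i * (a i + b i * u₀) ^ p * (b i / (a i + b i * u₀)) ^ k = 0 := by
    intro k
    have hk := (eventuallyEq_zero_sum_mul_pow_mul_rpow_affine hp hpos h k).eq_of_nhds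
    rw [Pi.zero_apply] at hk
    rw [← hk]
    refine Finset.sum_congr rfl fun i _ => ?_
    rw [rpow_sub_natCast (hpos i).ne', div_pow]
    field_simp
  funext i
  have := congrFun (Fintype.eq_zero_of_forall_sum_mul_pow_eq_zero hρ hmoments) i
  exact (mul_eq_zero.1 this).resolve_right (rpow_pos_of_pos (hpos i) p).ne'

end AffineRpow

theorem coeffs_eq_zero_of_eventually_sqrt_combination_eq_zero {ι : Type*} [Fintype ι]
    {t : ι → ℝ} (ht : Function.Injective t) (ht₀ : ∀ i, t i ≠ 0) {u₀ : ℝ} (hu₀ : 0 < u₀)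
    (hpos : ∀ i, 0 < 1 + t i * u₀) {R c : ℝ} {d : ι → ℝ}
    (h : ∀ᶠ u in 𝓝 u₀, R * √u + ∑ i, d i * √(1 + t i * u) + c = 0) :
    R = 0 ∧ c = 0 ∧ ∀ i, d i = 0 := by
  let a : Option (Option ι) → ℝ := fun | none => 0 | some none => 1 | some (some _) => 1
  let b : Option (Option ι) → ℝ := fun | none => 1 | some none => 0 | some (some i) => t i
  let e : Option (Option ι) → ℝ := fun | none => R | some none => c | some (some i) => d i
  have hhalf : ∀ k : ℕ, (1 / 2 : ℝ) ≠ k := by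
    intro k hk
    have : (2 * k : ℝ) = 1 := by rw [← hk]; norm_num
    norm_cast at this
    omega
  have hab : ∀ j k, a j * b k = a k * b j → j = k := by
    rintro (_ | _ | i) (_ | _ | j) hjk <;> simp_all [a, b, ht.eq_iff]
  have hpos_affine : ∀ j, 0 < a j + b j * u₀ := by
    rintro (_ | _ | i) <;> simp [a, b, hu₀, hpos]
  have he := eq_zero_of_sum_mul_rpow_affine_eventuallyEq_zero (e := e) hhalf hab hpos_affine <|
    h.mono fun u hu => by
      simp only [a, b, e, Fintype.sum_option, sqrt_eq_rpow] at hu ⊢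
      simp only [zero_add, one_mul, zero_mul, add_zero, one_rpow, mul_one, Pi.zero_apply]
      linear_combination hu
  exact ⟨congrFun he none, congrFun he (some none), fun i => congrFun he (some (some i))⟩

theorem injOn_sin_half_sq : Set.InjOn (fun θ => sin (θ / 2) ^ 2) (Set.Icc 0 π) := by
  intro x hx y hy hxy
  have hmem : ∀ z ∈ Set.Icc 0 π, z / 2 ∈ Set.Icc (-(π / 2)) (π / 2) := fun z hz =>
    ⟨by linarith [hz.1, pi_pos], by linarith [hz.2]⟩
  have hnonneg : ∀ z ∈ Set.Icc 0 π, 0 ≤ sin (z / 2) := fun z hz =>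
    sin_nonneg_of_nonneg_of_le_pi (by linarith [hz.1]) (by linarith [hz.2, pi_pos])
  have := injOn_sin (hmem x hx) (hmem y hy)
    ((pow_left_inj₀ (hnonneg x hx) (hnonneg y hy) two_ne_zero).1 hxy)
  linarith

theorem tendsto_two_mul_arsinh_sqrt {x : ℝ} (hx : 0 ≤ x) :
    Tendsto (fun u => 2 * arsinh √u) (𝓝 (sinh x ^ 2)) (𝓝 (2 * x)) := by
  have hcont : Continuous fun u => 2 * arsinh √u :=
    continuous_const.mul (continuous_arsinh.comp continuous_sqrt)
  have := hcont.tendsto (sinh x ^ 2)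
  rwa [sqrt_sq (sinh_nonneg_iff.2 hx), arsinh_sinh] at this

theorem eventually_exists_mem_Ioo_sinh_half_eq_sqrt {S : ℝ} (hS : 0 < S) :
    ∀ᶠ u in 𝓝 (sinh (S / 4) ^ 2), ∃ s ∈ Set.Ioo 0 S, sinh (s / 2) = √u := by
  have hS' : 2 * (S / 4) ∈ Set.Ioo 0 S := ⟨by positivity, by linarith⟩
  filter_upwards [(tendsto_two_mul_arsinh_sqrt (by positivity)).eventually
    (Ioo_mem_nhds hS'.1 hS'.2)] with u hs
  exact ⟨_, hs, by rw [mul_div_cancel_left₀ _ two_ne_zero, sinh_arsinh]⟩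

/-- `sinh(s/2)` and the constant `1` are not in the span of the rotation contributions
`f_θ` on `(0, S)`: if `R·sinh(s/2) + ∑ i, c i · f_{θ i}(s) + c₀ = 0` for all
`s ∈ (0, S)`, with distinct `θ i ∈ (0, π]`, then `R = 0`, `c₀ = 0`, and all `c i = 0`. -/
theorem reflector_conepoint_contributions_independent {n : ℕ} (θ : Fin n → ℝ)
    (hθ : ∀ i, θ i ∈ Set.Ioc (0 : ℝ) π) (hθ_inj : Function.Injective θ)
    (S : ℝ) (hS : 0 < S) (R c₀ : ℝ) (c : Fin n → ℝ)
    (h : ∀ s ∈ Set.Ioo (0 : ℝ) S,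
      R * Real.sinh (s / 2) +
        (∑ i, c i *
          (2 * π * (Real.sqrt (1 + Real.sinh (s / 2) ^ 2 / Real.sin (θ i / 2) ^ 2) - 1))) +
        c₀ = 0) :
    R = 0 ∧ c₀ = 0 ∧ ∀ i, c i = 0 := by
  have hsin : ∀ i, 0 < sin (θ i / 2) := fun i =>
    sin_pos_of_pos_of_lt_pi (by linarith [(hθ i).1]) (by linarith [(hθ i).2, pi_pos])
  have ht_inj : Function.Injective fun i => (sin (θ i / 2) ^ 2)⁻¹ := fun i j hij =>
    hθ_inj <| injOn_sin_half_sq (Set.Ioc_subset_Icc_self (hθ i))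
      (Set.Ioc_subset_Icc_self (hθ j)) (inv_injective hij)
  have hu₀ : 0 < sinh (S / 4) ^ 2 := pow_pos (sinh_pos_iff.2 (by positivity)) 2
  have hcomb : ∀ᶠ u in 𝓝 (sinh (S / 4) ^ 2), R * √u +
      ∑ i, 2 * π * c i * √(1 + (sin (θ i / 2) ^ 2)⁻¹ * u) + (c₀ - ∑ i, 2 * π * c i) = 0 := by
    filter_upwards [eventually_exists_mem_Ioo_sinh_half_eq_sqrt hS, lt_mem_nhds hu₀]
      with u ⟨s, hs, hsinh⟩ hu
    have hu_eq := h s hs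
    rw [hsinh, sq_sqrt hu.le] at hu_eq
    have hterm : ∀ i, c i * (2 * π * (√(1 + u / sin (θ i / 2) ^ 2) - 1)) =
        2 * π * c i * √(1 + (sin (θ i / 2) ^ 2)⁻¹ * u) - 2 * π * c i := fun i => by
      rw [div_eq_inv_mul]; ring
    simp only [hterm, Finset.sum_sub_distrib] at hu_eq
    linear_combination hu_eq
  obtain ⟨hR, hc, hd⟩ := coeffs_eq_zero_of_eventually_sqrt_combination_eq_zero ht_inj
    (fun i => inv_ne_zero (pow_pos (hsin i) 2).ne') hu₀ (fun i => by positivity) hcomb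
  have hc_zero : ∀ i, c i = 0 := fun i => by simpa [pi_ne_zero] using hd i
  exact ⟨hR, by simpa [hc_zero] using hc, hc_zero⟩
end
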